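/- arXiv:1808.07748 — 6 statements merged into one kernel-verified Lean document; each statement's English description precedes it below -/
import Mathlib

section
/- If (X₁,X₂) ~ BDsIW(θ₁,θ₂,θ₃,ζ), then X₁ and X₂ are positive quadrant dependent: for all x₁, x₂ ∈ ℕ, P(X₁ ≤ x₁, X₂ ≤ x₂) ≥ P(X₁ ≤ x₁)·P(X₂ ≤ x₂). -/
open MeasureTheory ProbabilityTheory Filter Real Set

/-- CDF of the discrete inverse Weibull distribution: `F(x;θ,ζ) = θ^((x+1)^(-ζ))`. -/
noncomputable def dsiwCDF (θ ζ : ℝ) (x : ℕ) : ℝ := θ ^ (((x : ℝ) + 1) ^ (-ζ))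

/-- `θ^(x^(-ζ))` with the convention `θ^(0^(-ζ)) = 0`. -/
noncomputable def dsiwC (θ ζ : ℝ) (x : ℕ) : ℝ := if x = 0 then 0 else θ ^ ((x : ℝ) ^ (-ζ))

/-- PMF of the discrete inverse Weibull distribution. -/
noncomputable def dsiwPMF (θ ζ : ℝ) (x : ℕ) : ℝ := dsiwCDF θ ζ x - dsiwC θ ζ x


/-! With `Fᵢ` the CDF of `Wᵢ`, independence makes the joint CDF of the common-shock pair
`F₀(x₁) F₁(x₂) F₂(min x₁ x₂)` and the product of its marginals `F₀(x₁) F₁(x₂) F₂(x₁) F₂(x₂)`.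
So the inequality reduces to `F₂(x₁) F₂(x₂) ≤ F₂(min x₁ x₂)`, which holds for any CDF since it
is monotone and bounded by `1`. -/

namespace ProbabilityTheory

variable {Ω β : Type*} [MeasurableSpace Ω] {μ : Measure Ω}

theorem measure_le_mul_measure_le_le_measure_le_min [IsProbabilityMeasure μ] [LinearOrder β]
    (X : Ω → β) (a b : β) :
    μ {ω | X ω ≤ a} * μ {ω | X ω ≤ b} ≤ μ {ω | X ω ≤ min a b} := by
  rcases le_total a b with hab | hba
  · rw [min_eq_left hab]
    exact mul_le_of_le_one_right' prob_le_one
  · rw [min_eq_right hba]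
    exact mul_le_of_le_one_left' prob_le_one

theorem IndepFun.measure_max_le_eq_mul [MeasurableSpace β] [LinearOrder β] [TopologicalSpace β]
    [OrderClosedTopology β] [OpensMeasurableSpace β] {X Y : Ω → β} (h : IndepFun X Y μ)
    (x : β) :
    μ {ω | max (X ω) (Y ω) ≤ x} = μ {ω | X ω ≤ x} * μ {ω | Y ω ≤ x} := by
  simp only [max_le_iff]
  exact h.measure_inter_preimage_eq_mul _ _ measurableSet_Iic measurableSet_Iic

theorem iIndepFun.measure_inter_preimage_eq_mul_fin_three [MeasurableSpace β] {W : Fin 3 → Ω → β}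
    (h : iIndepFun W μ) {s₀ s₁ s₂ : Set β} (hs₀ : MeasurableSet s₀) (hs₁ : MeasurableSet s₁)
    (hs₂ : MeasurableSet s₂) :
    μ (W 0 ⁻¹' s₀ ∩ W 1 ⁻¹' s₁ ∩ W 2 ⁻¹' s₂)
      = μ (W 0 ⁻¹' s₀) * μ (W 1 ⁻¹' s₁) * μ (W 2 ⁻¹' s₂) := by
  have hinter : W 0 ⁻¹' s₀ ∩ W 1 ⁻¹' s₁ ∩ W 2 ⁻¹' s₂
      = ⋂ i ∈ Finset.univ, W i ⁻¹' ![s₀, s₁, s₂] i := by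
    ext
    simp [Fin.forall_fin_succ, and_assoc]
  rw [hinter, h.measure_inter_preimage_eq_mul _ fun i _ => by fin_cases i <;> assumption,
    Fin.prod_univ_three]
  rfl

end ProbabilityTheory

theorem max_le_and_max_le_iff {α : Type*} [LinearOrder α] {a b c x₁ x₂ : α} :
    max a c ≤ x₁ ∧ max b c ≤ x₂ ↔ (a ≤ x₁ ∧ b ≤ x₂) ∧ c ≤ min x₁ x₂ := by
  simp only [max_le_iff, le_min_iff]
  tauto

theorem bdsiw_pqd_general {Ω : Type*} [MeasurableSpace Ω] (μ : Measure Ω)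
    [IsProbabilityMeasure μ]
    (W : Fin 3 → Ω → ℕ)
    (hindep : iIndepFun W μ)
    (x₁ x₂ : ℕ) :
    μ {ω | max (W 0 ω) (W 2 ω) ≤ x₁} * μ {ω | max (W 1 ω) (W 2 ω) ≤ x₂}
      ≤ μ {ω | max (W 0 ω) (W 2 ω) ≤ x₁ ∧ max (W 1 ω) (W 2 ω) ≤ x₂} := by
  have hjoint : μ {ω | max (W 0 ω) (W 2 ω) ≤ x₁ ∧ max (W 1 ω) (W 2 ω) ≤ x₂}
      = μ {ω | W 0 ω ≤ x₁} * μ {ω | W 1 ω ≤ x₂} * μ {ω | W 2 ω ≤ min x₁ x₂} := by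
    simp only [max_le_and_max_le_iff]
    exact hindep.measure_inter_preimage_eq_mul_fin_three measurableSet_Iic measurableSet_Iic
      measurableSet_Iic
  rw [(hindep.indepFun (by decide : (0 : Fin 3) ≠ 2)).measure_max_le_eq_mul,
    (hindep.indepFun (by decide : (1 : Fin 3) ≠ 2)).measure_max_le_eq_mul, hjoint]
  calc μ {ω | W 0 ω ≤ x₁} * μ {ω | W 2 ω ≤ x₁} * (μ {ω | W 1 ω ≤ x₂} * μ {ω | W 2 ω ≤ x₂})
      = μ {ω | W 0 ω ≤ x₁} * μ {ω | W 1 ω ≤ x₂}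
          * (μ {ω | W 2 ω ≤ x₁} * μ {ω | W 2 ω ≤ x₂}) := by ring
    _ ≤ μ {ω | W 0 ω ≤ x₁} * μ {ω | W 1 ω ≤ x₂} * μ {ω | W 2 ω ≤ min x₁ x₂} := by
      gcongr
      exact measure_le_mul_measure_le_le_measure_le_min _ _ _

/-- `X₁` and `X₂` are positive quadrant dependent when `(X₁,X₂) ~ BDsIW(θ₁,θ₂,θ₃,ζ)`:
`P(X₁ ≤ x₁, X₂ ≤ x₂) ≥ P(X₁ ≤ x₁) ⬝ P(X₂ ≤ x₂)` for all `x₁, x₂ ∈ ℕ`. -/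
theorem bdsiw_pqd {Ω : Type*} [MeasurableSpace Ω] (μ : Measure Ω)
    [IsProbabilityMeasure μ] (θ : Fin 3 → ℝ) (ζ : ℝ)
    (hθ : ∀ i, θ i ∈ Set.Ioo (0:ℝ) 1) (hζ : 0 < ζ)
    (W : Fin 3 → Ω → ℕ) (hW : ∀ i, Measurable (W i))
    (hindep : iIndepFun W μ)
    (hcdf : ∀ i x, μ {ω | W i ω ≤ x} = ENNReal.ofReal (dsiwCDF (θ i) ζ x))
    (x₁ x₂ : ℕ) :
    μ {ω | max (W 0 ω) (W 2 ω) ≤ x₁} * μ {ω | max (W 1 ω) (W 2 ω) ≤ x₂}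
      ≤ μ {ω | max (W 0 ω) (W 2 ω) ≤ x₁ ∧ max (W 1 ω) (W 2 ω) ≤ x₂} :=
  bdsiw_pqd_general μ W hindep x₁ x₂
end

section
/- If (X₁,X₂) ~ BDsIW(θ₁,θ₂,θ₃,ζ) and x₁ < x₂ (both in ℕ), then P(X₁ = x₁, X₂ = x₂) = [(θ₁θ₃)^((x₁+1)^(−ζ)) − (θ₁θ₃)^(x₁^(−ζ))] · [θ₂^((x₂+1)^(−ζ)) − θ₂^(x₂^(−ζ))]. -/
/-! Since `W₃ ≤ X₁ = x₁ < x₂`, the event `{X₁ = x₁, X₂ = x₂}` is `{max W₁ W₃ = x₁} ∩ {W₂ = x₂}`,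
an intersection of independent events. The maximum of independent DsIW variables with a common
shape `ζ` is DsIW with the product of the parameters, since their CDFs multiply:
`θ₁^t θ₃^t = (θ₁θ₃)^t`. -/

open MeasureTheory ProbabilityTheory Filter Real Set

lemma max_eq_and_max_eq_iff_of_lt {α : Type*} [LinearOrder α] {a b c x y : α} (hxy : x < y) :
    (max a c = x ∧ max b c = y) ↔ (max a c = x ∧ b = y) := by
  constructor
  · rintro ⟨hx, hy⟩
    have hcy : c < y := (le_max_right a c).trans_lt (hx ▸ hxy)
    rcases max_eq_iff.mp hy with ⟨hb, -⟩ | ⟨hc, -⟩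
    · exact ⟨hx, hb⟩
    · exact absurd hc hcy.ne
  · rintro ⟨hx, rfl⟩
    exact ⟨hx, max_eq_left ((le_max_right a c).trans (hx ▸ hxy.le))⟩

namespace ProbabilityTheory

variable {Ω α β : Type*} [MeasurableSpace Ω] {μ : Measure Ω}

lemma IndepFun.measureReal_inter_preimage_eq_mul [IsFiniteMeasure μ] [MeasurableSpace α]
    [MeasurableSpace β] {X : Ω → α} {Y : Ω → β} (h : IndepFun X Y μ) {s : Set α} {t : Set β}
    (hs : MeasurableSet s) (ht : MeasurableSet t) :
    μ.real (X ⁻¹' s ∩ Y ⁻¹' t) = μ.real (X ⁻¹' s) * μ.real (Y ⁻¹' t) := by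
  simp only [measureReal_def, h.measure_inter_preimage_eq_mul s t hs ht, ENNReal.toReal_mul]

lemma IndepFun.measureReal_max_le [IsFiniteMeasure μ] [LinearOrder α] [TopologicalSpace α]
    [ClosedIicTopology α] [MeasurableSpace α] [OpensMeasurableSpace α] {X Y : Ω → α}
    (h : IndepFun X Y μ) (k : α) :
    μ.real {ω | max (X ω) (Y ω) ≤ k} = μ.real {ω | X ω ≤ k} * μ.real {ω | Y ω ≤ k} := by
  simp_rw [max_le_iff, ofPred_and]
  exact h.measureReal_inter_preimage_eq_mul measurableSet_Iic measurableSet_Iic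

lemma measureReal_eq_succ_eq_sub [IsFiniteMeasure μ] {X : Ω → ℕ} (hX : Measurable X) (k : ℕ) :
    μ.real {ω | X ω = k + 1} = μ.real {ω | X ω ≤ k + 1} - μ.real {ω | X ω ≤ k} := by
  have hset : {ω | X ω = k + 1} = {ω | X ω ≤ k + 1} \ {ω | X ω ≤ k} := by
    ext ω
    simp only [mem_ofPred_eq, Set.mem_sdiff]
    omega
  have hsub : {ω | X ω ≤ k} ⊆ {ω | X ω ≤ k + 1} := fun ω (h : X ω ≤ k) ↦ h.trans k.le_succ
  rw [hset, measureReal_sdiff hsub (hX measurableSet_Iic)]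

end ProbabilityTheory

section DsIW

lemma dsiwCDF_nonneg {θ : ℝ} (hθ : 0 ≤ θ) (ζ : ℝ) (x : ℕ) : 0 ≤ dsiwCDF θ ζ x :=
  Real.rpow_nonneg hθ _

lemma dsiwCDF_mul {θ₁ θ₂ : ℝ} (hθ₁ : 0 ≤ θ₁) (hθ₂ : 0 ≤ θ₂) (ζ : ℝ) (x : ℕ) :
    dsiwCDF (θ₁ * θ₂) ζ x = dsiwCDF θ₁ ζ x * dsiwCDF θ₂ ζ x :=
  Real.mul_rpow hθ₁ hθ₂

lemma dsiwPMF_zero (θ ζ : ℝ) : dsiwPMF θ ζ 0 = dsiwCDF θ ζ 0 := by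
  simp [dsiwPMF, dsiwC]

lemma dsiwPMF_succ (θ ζ : ℝ) (k : ℕ) :
    dsiwPMF θ ζ (k + 1) = dsiwCDF θ ζ (k + 1) - dsiwCDF θ ζ k := by
  simp [dsiwPMF, dsiwC, dsiwCDF]

variable {Ω : Type*} [MeasurableSpace Ω] {μ : Measure Ω} [IsFiniteMeasure μ]

lemma measureReal_eq_dsiwPMF {θ ζ : ℝ} {X : Ω → ℕ} (hX : Measurable X)
    (hcdf : ∀ k, μ.real {ω | X ω ≤ k} = dsiwCDF θ ζ k) (k : ℕ) :
    μ.real {ω | X ω = k} = dsiwPMF θ ζ k := by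
  cases k with
  | zero => simp only [Nat.le_zero, ← hcdf 0, dsiwPMF_zero]
  | succ k => rw [measureReal_eq_succ_eq_sub hX, hcdf, hcdf, dsiwPMF_succ]

end DsIW

theorem bdsiw_pmf_lt_general {Ω : Type*} [MeasurableSpace Ω] (μ : Measure Ω)
    [IsProbabilityMeasure μ] (θ : Fin 3 → ℝ) (ζ : ℝ)
    (hθ : ∀ i, θ i ∈ Set.Ioo (0:ℝ) 1)
    (W : Fin 3 → Ω → ℕ) (hW : ∀ i, Measurable (W i))
    (hindep : iIndepFun W μ)
    (hcdf : ∀ i x, μ {ω | W i ω ≤ x} = ENNReal.ofReal (dsiwCDF (θ i) ζ x))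
    (x₁ x₂ : ℕ) (hx : x₁ < x₂) :
    (μ {ω | max (W 0 ω) (W 2 ω) = x₁ ∧ max (W 1 ω) (W 2 ω) = x₂}).toReal
      = dsiwPMF (θ 0 * θ 2) ζ x₁ * dsiwPMF (θ 1) ζ x₂ := by
  have hθ₀ i : 0 ≤ θ i := (hθ i).1.le
  have hcdf_real i k : μ.real {ω | W i ω ≤ k} = dsiwCDF (θ i) ζ k := by
    rw [measureReal_def, hcdf, ENNReal.toReal_ofReal (dsiwCDF_nonneg (hθ₀ i) ζ k)]
  have hcdf_max k : μ.real {ω | max (W 0 ω) (W 2 ω) ≤ k} = dsiwCDF (θ 0 * θ 2) ζ k := by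
    rw [(hindep.indepFun (by decide)).measureReal_max_le, hcdf_real, hcdf_real,
      dsiwCDF_mul (hθ₀ 0) (hθ₀ 2)]
  have hindep_max : IndepFun (fun ω ↦ max (W 0 ω) (W 2 ω)) (W 1) μ :=
    (hindep.indepFun_prodMk hW 0 2 1 (by decide) (by decide)).comp
      (measurable_fst.max measurable_snd) measurable_id
  simp_rw [max_eq_and_max_eq_iff_of_lt hx, ← measureReal_def, ofPred_and]
  calc μ.real ({ω | max (W 0 ω) (W 2 ω) = x₁} ∩ {ω | W 1 ω = x₂})
      = μ.real {ω | max (W 0 ω) (W 2 ω) = x₁} * μ.real {ω | W 1 ω = x₂} :=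
        hindep_max.measureReal_inter_preimage_eq_mul (measurableSet_singleton x₁)
          (measurableSet_singleton x₂)
    _ = dsiwPMF (θ 0 * θ 2) ζ x₁ * dsiwPMF (θ 1) ζ x₂ := by
        rw [measureReal_eq_dsiwPMF ((hW 0).max (hW 2)) hcdf_max,
          measureReal_eq_dsiwPMF (hW 1) (hcdf_real 1)]

/-- The joint PMF of `(X₁,X₂) ~ BDsIW(θ₁,θ₂,θ₃,ζ)` below the diagonal: for `x₁ < x₂`,
`P(X₁ = x₁, X₂ = x₂) = [(θ₁θ₃)^((x₁+1)^(-ζ)) − (θ₁θ₃)^(x₁^(-ζ))]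
  ⬝ [θ₂^((x₂+1)^(-ζ)) − θ₂^(x₂^(-ζ))]`. -/
theorem bdsiw_pmf_lt {Ω : Type*} [MeasurableSpace Ω] (μ : Measure Ω)
    [IsProbabilityMeasure μ] (θ : Fin 3 → ℝ) (ζ : ℝ)
    (hθ : ∀ i, θ i ∈ Set.Ioo (0:ℝ) 1) (hζ : 0 < ζ)
    (W : Fin 3 → Ω → ℕ) (hW : ∀ i, Measurable (W i))
    (hindep : iIndepFun W μ)
    (hcdf : ∀ i x, μ {ω | W i ω ≤ x} = ENNReal.ofReal (dsiwCDF (θ i) ζ x))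
    (x₁ x₂ : ℕ) (hx : x₁ < x₂) :
    (μ {ω | max (W 0 ω) (W 2 ω) = x₁ ∧ max (W 1 ω) (W 2 ω) = x₂}).toReal
      = dsiwPMF (θ 0 * θ 2) ζ x₁ * dsiwPMF (θ 1) ζ x₂ :=
  bdsiw_pmf_lt_general μ θ ζ hθ W hW hindep hcdf x₁ x₂ hx
end

section
/- The diagonal PMF of the BDsIW distribution is nonnegative: for all x ∈ ℕ, 0 < θ₁,θ₂,θ₃ < 1, ζ > 0, θ₂^((x+1)^(−ζ)) · [(θ₁θ₃)^((x+1)^(−ζ)) − (θ₁θ₃)^(x^(−ζ))] ≥ (θ₂θ₃)^(x^(−ζ)) · [θ₁^((x+1)^(−ζ)) − θ₁^(x^(−ζ))], with the convention θ^(0^(−ζ)) = 0. -/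
open MeasureTheory ProbabilityTheory Filter Real Set

/-- Nonnegativity of the diagonal PMF of the BDsIW distribution: for all `x ∈ ℕ`,
`0 < θ₁,θ₂,θ₃ < 1` and `ζ > 0`,
`θ₂^((x+1)^(-ζ)) [(θ₁θ₃)^((x+1)^(-ζ)) − (θ₁θ₃)^(x^(-ζ))]
  ≥ (θ₂θ₃)^(x^(-ζ)) [θ₁^((x+1)^(-ζ)) − θ₁^(x^(-ζ))]`, with `θ^(0^(-ζ)) = 0`. -/
theorem bdsiw_pmf_diag_nonneg (θ₁ θ₂ θ₃ ζ : ℝ)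
    (hθ₁ : θ₁ ∈ Set.Ioo (0:ℝ) 1) (hθ₂ : θ₂ ∈ Set.Ioo (0:ℝ) 1)
    (hθ₃ : θ₃ ∈ Set.Ioo (0:ℝ) 1) (hζ : 0 < ζ) (x : ℕ) :
    dsiwC (θ₂ * θ₃) ζ x * (dsiwCDF θ₁ ζ x - dsiwC θ₁ ζ x)
      ≤ dsiwCDF θ₂ ζ x * (dsiwCDF (θ₁ * θ₃) ζ x - dsiwC (θ₁ * θ₃) ζ x) := by
  obtain ⟨h1, h1'⟩ := hθ₁
  obtain ⟨h2, h2'⟩ := hθ₂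
  obtain ⟨h3, h3'⟩ := hθ₃
  rcases Nat.eq_zero_or_pos x with hx | hx
  · subst hx
    simp only [dsiwC, dsiwCDF, if_pos rfl, sub_zero, zero_mul]
    · norm_num
      positivity
  have hx0 : (0:ℝ) < (x:ℝ) := by exact_mod_cast hx
  have hxne : x ≠ 0 := hx.ne'
  simp only [dsiwC, dsiwCDF, if_neg hxne]
  set a : ℝ := ((x:ℝ) + 1) ^ (-ζ) with ha
  set b : ℝ := (x:ℝ) ^ (-ζ) with hb
  have hab : a ≤ b := rpow_le_rpow_of_nonpos hx0 (by linarith) (by linarith)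
  -- rpow monotonicity facts
  have h31 : θ₃ ^ b ≤ θ₃ ^ a := rpow_le_rpow_of_exponent_ge h3 h3'.le hab
  have h21 : θ₂ ^ b ≤ θ₂ ^ a := rpow_le_rpow_of_exponent_ge h2 h2'.le hab
  have h11 : θ₁ ^ b ≤ θ₁ ^ a := rpow_le_rpow_of_exponent_ge h1 h1'.le hab
  have hp1a : (0:ℝ) < θ₁ ^ a := rpow_pos_of_pos h1 _
  have hp3b : (0:ℝ) < θ₃ ^ b := rpow_pos_of_pos h3 _
  have hp2a : (0:ℝ) < θ₂ ^ a := rpow_pos_of_pos h2 _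
  rw [Real.mul_rpow h2.le h3.le, Real.mul_rpow h1.le h3.le,
    Real.mul_rpow h1.le h3.le]
  have step1 : θ₂ ^ b * θ₃ ^ b * (θ₁ ^ a - θ₁ ^ b)
      ≤ θ₂ ^ a * θ₃ ^ b * (θ₁ ^ a - θ₁ ^ b) := by
    apply mul_le_mul_of_nonneg_right (mul_le_mul_of_nonneg_right h21 hp3b.le)
    linarith
  have step2 : θ₃ ^ b * (θ₁ ^ a - θ₁ ^ b) ≤ θ₁ ^ a * θ₃ ^ a - θ₁ ^ b * θ₃ ^ b :=
    by nlinarith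
  calc θ₂ ^ b * θ₃ ^ b * (θ₁ ^ a - θ₁ ^ b)
      ≤ θ₂ ^ a * θ₃ ^ b * (θ₁ ^ a - θ₁ ^ b) := step1
    _ = θ₂ ^ a * (θ₃ ^ b * (θ₁ ^ a - θ₁ ^ b)) := by ring
    _ ≤ θ₂ ^ a * (θ₁ ^ a * θ₃ ^ a - θ₁ ^ b * θ₃ ^ b) :=
        mul_le_mul_of_nonneg_left step2 hp2a.le
end

section
/- The joint survival function R(x₁,x₂) = 1 − (θ₁θ₃)^((x₁+1)^(−ζ)) − (θ₂θ₃)^((x₂+1)^(−ζ)) + θ₁^((x₁+1)^(−ζ)) θ₂^((x₂+1)^(−ζ)) θ₃^((min(x₁,x₂)+1)^(−ζ)) of the BDsIW distribution is totally positive of order two: for all natural numbers u₁ ≤ u₂ and v₁ ≤ v₂, R(u₁,v₁)·R(u₂,v₂) ≥ R(u₂,v₁)·R(u₁,v₂). -/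
open MeasureTheory ProbabilityTheory Filter Real Set

/-- The joint survival function of the BDsIW distribution. -/
noncomputable def bdsiwSurvival (θ₁ θ₂ θ₃ ζ : ℝ) (x₁ x₂ : ℕ) : ℝ :=
  1 - dsiwCDF (θ₁ * θ₃) ζ x₁ - dsiwCDF (θ₂ * θ₃) ζ x₂
    + dsiwCDF θ₁ ζ x₁ * dsiwCDF θ₂ ζ x₂ * dsiwCDF θ₃ ζ (min x₁ x₂)

/-! `R` is the survival function of `(max W₁ W₃, max W₂ W₃)`. On a rectangle above the diagonal
it has the form `R x y = a y - c x * b y` with `c = F₁ F₃` increasing, so its `2 × 2` minor is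
`(c x₂ - c x₁) (b y₁ a y₂ - a y₁ b y₂)`; the second factor is nonnegative for DsIW margins because
`(1 - w ^ k) / (1 - w)` increases in `w` when `k ≥ 1` (convexity of `w ^ k`). Below the diagonal
the same holds by symmetry, and on a diagonal square the minor is an explicit sum of nonnegative
terms. As `R > 0`, nonnegative minors of adjacent rectangles glue, and every rectangle splits into
such pieces. -/

section TP2

variable {α β : Type*}

def TP2Rect (K : α → β → ℝ) (x₁ x₂ : α) (y₁ y₂ : β) : Prop :=
  K x₂ y₁ * K x₁ y₂ ≤ K x₁ y₁ * K x₂ y₂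

def IsTP2 [Preorder α] [Preorder β] (K : α → β → ℝ) : Prop :=
  ∀ ⦃x₁ x₂ : α⦄ ⦃y₁ y₂ : β⦄, x₁ ≤ x₂ → y₁ ≤ y₂ → TP2Rect K x₁ x₂ y₁ y₂

variable {K : α → β → ℝ} {x₁ x₂ x₃ : α} {y₁ y₂ y₃ : β}

theorem tp2Rect_swap :
    TP2Rect (Function.swap K) y₁ y₂ x₁ x₂ ↔ TP2Rect K x₁ x₂ y₁ y₂ := by
  simp only [TP2Rect, Function.swap]
  rw [mul_comm (K x₁ y₂)]

theorem TP2Rect.trans_left (hK : ∀ x y, 0 < K x y) (h₁₂ : TP2Rect K x₁ x₂ y₁ y₂)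
    (h₂₃ : TP2Rect K x₂ x₃ y₁ y₂) : TP2Rect K x₁ x₃ y₁ y₂ := by
  refine le_of_mul_le_mul_left ?_ (mul_pos (hK x₂ y₁) (hK x₂ y₂))
  calc K x₂ y₁ * K x₂ y₂ * (K x₃ y₁ * K x₁ y₂)
      = K x₂ y₁ * K x₁ y₂ * (K x₃ y₁ * K x₂ y₂) := by ring
    _ ≤ K x₁ y₁ * K x₂ y₂ * (K x₂ y₁ * K x₃ y₂) :=
        mul_le_mul h₁₂ h₂₃ (mul_pos (hK _ _) (hK _ _)).le (mul_pos (hK _ _) (hK _ _)).le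
    _ = K x₂ y₁ * K x₂ y₂ * (K x₁ y₁ * K x₃ y₂) := by ring

theorem TP2Rect.trans_right (hK : ∀ x y, 0 < K x y) (h₁₂ : TP2Rect K x₁ x₂ y₁ y₂)
    (h₂₃ : TP2Rect K x₁ x₂ y₂ y₃) : TP2Rect K x₁ x₂ y₁ y₃ :=
  tp2Rect_swap.1 <| TP2Rect.trans_left (fun y x => hK x y) (tp2Rect_swap.2 h₁₂)
    (tp2Rect_swap.2 h₂₃)

end TP2

theorem IsTP2.of_upper_of_lower_of_diag {α : Type*} [LinearOrder α] {K : α → α → ℝ}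
    (hK : ∀ x y, 0 < K x y)
    (hupper : ∀ ⦃x₁ x₂ y₁ y₂⦄, x₁ ≤ x₂ → x₂ ≤ y₁ → y₁ ≤ y₂ → TP2Rect K x₁ x₂ y₁ y₂)
    (hlower : ∀ ⦃x₁ x₂ y₁ y₂⦄, y₁ ≤ y₂ → y₂ ≤ x₁ → x₁ ≤ x₂ → TP2Rect K x₁ x₂ y₁ y₂)
    (hdiag : ∀ ⦃c d⦄, c ≤ d → TP2Rect K c d c d) : IsTP2 K := by
  have corner : ∀ ⦃x y d⦄, x ≤ d → y ≤ d → TP2Rect K x d y d := by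
    intro x y d hx hy
    rcases le_total y x with hyx | hxy
    · exact (hlower hyx le_rfl hx).trans_right hK (hdiag hx)
    · exact (hupper hxy le_rfl hy).trans_left hK (hdiag hy)
  intro x₁ x₂ y₁ y₂ hx hy
  rcases le_total y₂ x₁ with h | h₁
  · exact hlower hy h hx
  rcases le_total x₂ y₁ with h | h₂
  · exact hupper hx h hy
  rcases le_total y₂ x₂ with h | h
  · exact (corner h₁ hy).trans_left hK (hlower hy le_rfl h)
  · exact (corner hx h₂).trans_right hK (hupper hx le_rfl h)

section MaxShock

variable {α : Type*} [LinearOrder α] {F₁ F₂ F₃ : α → ℝ}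

/-- Survival function of `(max W₁ W₃, max W₂ W₃)` for independent `Wᵢ` with distribution
functions `Fᵢ`. -/
def maxShockSurvival (F₁ F₂ F₃ : α → ℝ) (x y : α) : ℝ :=
  1 - F₁ x * F₃ x - F₂ y * F₃ y + F₁ x * F₂ y * F₃ (min x y)

theorem maxShockSurvival_swap :
    Function.swap (maxShockSurvival F₁ F₂ F₃) = maxShockSurvival F₂ F₁ F₃ := by
  ext x y
  simp only [Function.swap, maxShockSurvival, min_comm y x]
  ring

theorem maxShockSurvival_pos (h₁ : ∀ x, F₁ x ∈ Icc 0 1) (h₂ : ∀ x, F₂ x ∈ Icc 0 1)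
    (h₃ : ∀ x, F₃ x ∈ Ico 0 1) (hF₃ : Monotone F₃) (x y : α) :
    0 < maxShockSurvival F₁ F₂ F₃ x y := by
  wlog hxy : x ≤ y generalizing F₁ F₂ x y
  · rw [← maxShockSurvival_swap]
    exact this h₂ h₁ y x (le_of_not_ge hxy)
  obtain ⟨-, hp₁⟩ := h₁ x
  obtain ⟨-, hq₁⟩ := h₂ y
  obtain ⟨hs₀, -⟩ := h₃ x
  obtain ⟨-, ht₁⟩ := h₃ y
  have hst : F₃ x ≤ F₃ y := hF₃ hxy
  -- `R x y = (1 - F₃ y) + (1 - F₂ y) (F₃ y - F₁ x F₃ x)`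
  rw [maxShockSurvival, min_eq_left hxy]
  nlinarith [mul_nonneg (sub_nonneg.2 hq₁) (sub_nonneg.2 (mul_le_of_le_one_left hs₀ hp₁)),
    mul_nonneg (sub_nonneg.2 hq₁) (sub_nonneg.2 hst)]

theorem tp2Rect_maxShockSurvival_of_le {x₁ x₂ y₁ y₂ : α} (hx : x₁ ≤ x₂) (hxy : x₂ ≤ y₁)
    (hy : y₁ ≤ y₂) (hF₁₃ : F₁ x₁ * F₃ x₁ ≤ F₁ x₂ * F₃ x₂)
    (hF₂₃ : (1 - F₂ y₁ * F₃ y₁) * (1 - F₂ y₂) ≤ (1 - F₂ y₁) * (1 - F₂ y₂ * F₃ y₂)) :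
    TP2Rect (maxShockSurvival F₁ F₂ F₃) x₁ x₂ y₁ y₂ := by
  simp only [TP2Rect, maxShockSurvival, min_eq_left hxy, min_eq_left (hx.trans hxy),
    min_eq_left (hxy.trans hy), min_eq_left ((hx.trans hxy).trans hy)]
  -- here `R x y = (1 - F₂ y F₃ y) - F₁ x F₃ x (1 - F₂ y)`, so the minor is the product of the gaps
  linear_combination mul_nonneg (sub_nonneg.2 hF₁₃) (sub_nonneg.2 hF₂₃)

theorem tp2Rect_maxShockSurvival_of_ge {x₁ x₂ y₁ y₂ : α} (hy : y₁ ≤ y₂) (hyx : y₂ ≤ x₁)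
    (hx : x₁ ≤ x₂) (hF₂₃ : F₂ y₁ * F₃ y₁ ≤ F₂ y₂ * F₃ y₂)
    (hF₁₃ : (1 - F₁ x₁ * F₃ x₁) * (1 - F₁ x₂) ≤ (1 - F₁ x₁) * (1 - F₁ x₂ * F₃ x₂)) :
    TP2Rect (maxShockSurvival F₁ F₂ F₃) x₁ x₂ y₁ y₂ := by
  rw [← tp2Rect_swap, maxShockSurvival_swap]
  exact tp2Rect_maxShockSurvival_of_le hy hyx hx hF₂₃ hF₁₃

theorem tp2Rect_maxShockSurvival_diag (h₁ : ∀ x, F₁ x ∈ Icc 0 1) (h₂ : ∀ x, F₂ x ∈ Icc 0 1)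
    (h₃ : ∀ x, F₃ x ∈ Icc 0 1) (hF₁ : Monotone F₁) (hF₂ : Monotone F₂) (hF₃ : Monotone F₃)
    {c d : α} (hcd : c ≤ d) : TP2Rect (maxShockSurvival F₁ F₂ F₃) c d c d := by
  simp only [TP2Rect, maxShockSurvival, min_self, min_eq_left hcd, min_eq_right hcd]
  have hA := sub_nonneg.2 (hF₁ hcd)
  have hB := sub_nonneg.2 (hF₂ hcd)
  have hG := sub_nonneg.2 (hF₃ hcd)
  have hA' := sub_nonneg.2 (h₁ d).2
  have hB' := sub_nonneg.2 (h₂ d).2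
  have hG' := sub_nonneg.2 (h₃ d).2
  linear_combination mul_nonneg (mul_nonneg hG' hG) (mul_nonneg (h₁ d).1 (h₂ d).1)
    + mul_nonneg (mul_nonneg hG' (h₃ c).1) (mul_nonneg hA hB)
    + mul_nonneg (mul_nonneg hG (h₃ c).1)
      (mul_nonneg (mul_nonneg (h₁ c).1 (h₂ c).1) (mul_nonneg hA' hB'))

theorem isTP2_maxShockSurvival (h₁ : ∀ x, F₁ x ∈ Icc 0 1) (h₂ : ∀ x, F₂ x ∈ Icc 0 1)
    (h₃ : ∀ x, F₃ x ∈ Ico 0 1) (hF₁ : Monotone F₁) (hF₂ : Monotone F₂) (hF₃ : Monotone F₃)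
    (hr₁ : ∀ ⦃x y⦄, x ≤ y → (1 - F₁ x * F₃ x) * (1 - F₁ y) ≤ (1 - F₁ x) * (1 - F₁ y * F₃ y))
    (hr₂ : ∀ ⦃x y⦄, x ≤ y → (1 - F₂ x * F₃ x) * (1 - F₂ y) ≤ (1 - F₂ x) * (1 - F₂ y * F₃ y)) :
    IsTP2 (maxShockSurvival F₁ F₂ F₃) := by
  have h₃' : ∀ x, F₃ x ∈ Icc 0 1 := fun x => Ico_subset_Icc_self (h₃ x)
  have hF₁₃ : Monotone (F₁ * F₃) := hF₁.mul hF₃ (fun x => (h₁ x).1) (fun x => (h₃ x).1)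
  have hF₂₃ : Monotone (F₂ * F₃) := hF₂.mul hF₃ (fun x => (h₂ x).1) (fun x => (h₃ x).1)
  exact IsTP2.of_upper_of_lower_of_diag (maxShockSurvival_pos h₁ h₂ h₃ hF₃)
    (fun _ _ _ _ hx hxy hy => tp2Rect_maxShockSurvival_of_le hx hxy hy (hF₁₃ hx) (hr₂ hy))
    (fun _ _ _ _ hy hyx hx => tp2Rect_maxShockSurvival_of_ge hy hyx hx (hF₂₃ hy) (hr₁ hx))
    (fun _ _ hcd => tp2Rect_maxShockSurvival_diag h₁ h₂ h₃' hF₁ hF₂ hF₃ hcd)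

end MaxShock

theorem tp2Rect_one_sub_rpow {z₁ z₂ e₁ e₂ : ℝ} (hz₁ : 0 < z₁) (hz : z₁ ≤ z₂) (hz₂ : z₂ < 1)
    (he₁ : 0 < e₁) (he : e₁ ≤ e₂) : TP2Rect (fun z e : ℝ => 1 - z ^ e) z₁ z₂ e₁ e₂ := by
  have hk : 1 ≤ e₂ / e₁ := (one_le_div he₁).2 he
  have hpow : ∀ z : ℝ, 0 ≤ z → z ^ e₂ = (z ^ e₁) ^ (e₂ / e₁) := fun z hz => by
    rw [← rpow_mul hz, mul_div_cancel₀ _ he₁.ne']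
  have hu : 0 ≤ z₁ ^ e₁ := rpow_nonneg hz₁.le _
  have hv : z₂ ^ e₁ < 1 := rpow_lt_one (hz₁.le.trans hz) hz₂ he₁
  show (1 - z₂ ^ e₁) * (1 - z₁ ^ e₂) ≤ (1 - z₁ ^ e₁) * (1 - z₂ ^ e₂)
  rw [hpow z₁ hz₁.le, hpow z₂ (hz₁.le.trans hz)]
  rcases (rpow_le_rpow hz₁.le hz he₁.le).eq_or_lt with heq | hlt
  · rw [heq]
  -- convexity of `w ↦ w ^ (e₂ / e₁)` on `[z₁ ^ e₁, 1]`, at the point `z₂ ^ e₁`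
  have hconv := (convexOn_rpow hk).secant_mono_aux1 hu (zero_le_one' ℝ) hlt hv
  rw [one_rpow] at hconv
  linarith

theorem dsiwCDF_mul_s13 {θ θ' : ℝ} (hθ : 0 ≤ θ) (hθ' : 0 ≤ θ') (ζ : ℝ) (x : ℕ) :
    dsiwCDF (θ * θ') ζ x = dsiwCDF θ ζ x * dsiwCDF θ' ζ x :=
  mul_rpow hθ hθ'

theorem dsiwCDF_mem_Ioo {θ : ℝ} (hθ : θ ∈ Ioo 0 1) (ζ : ℝ) (x : ℕ) : dsiwCDF θ ζ x ∈ Ioo 0 1 :=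
  ⟨rpow_pos_of_pos hθ.1 _, rpow_lt_one hθ.1.le hθ.2 (rpow_pos_of_pos (by positivity) _)⟩

theorem antitone_natCast_add_one_rpow_neg {ζ : ℝ} (hζ : 0 ≤ ζ) :
    Antitone fun x : ℕ => ((x : ℝ) + 1) ^ (-ζ) :=
  fun x y hxy => rpow_le_rpow_of_nonpos (by positivity)
    (by exact_mod_cast Nat.add_le_add_right hxy 1) (neg_nonpos.2 hζ)

theorem dsiwCDF_monotone {θ ζ : ℝ} (hθ : θ ∈ Ioo 0 1) (hζ : 0 ≤ ζ) : Monotone (dsiwCDF θ ζ) :=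
  fun _ _ hxy => rpow_le_rpow_of_exponent_ge hθ.1 hθ.2.le
    (antitone_natCast_add_one_rpow_neg hζ hxy)

theorem dsiwCDF_one_sub_mul_le {θ θ₃ ζ : ℝ} (hθ : θ ∈ Ioo 0 1) (hθ₃ : θ₃ ∈ Ioo 0 1) (hζ : 0 ≤ ζ)
    {x y : ℕ} (hxy : x ≤ y) :
    (1 - dsiwCDF θ ζ x * dsiwCDF θ₃ ζ x) * (1 - dsiwCDF θ ζ y)
      ≤ (1 - dsiwCDF θ ζ x) * (1 - dsiwCDF θ ζ y * dsiwCDF θ₃ ζ y) := by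
  have h := tp2Rect_one_sub_rpow (mul_pos hθ.1 hθ₃.1)
    (mul_le_of_le_one_right hθ.1.le hθ₃.2.le) hθ.2 (rpow_pos_of_pos (by positivity) _)
    (antitone_natCast_add_one_rpow_neg hζ hxy)
  simp only [TP2Rect] at h
  rw [← dsiwCDF_mul_s13 hθ.1.le hθ₃.1.le, ← dsiwCDF_mul_s13 hθ.1.le hθ₃.1.le]
  unfold dsiwCDF
  linear_combination h

theorem bdsiwSurvival_eq_maxShockSurvival {θ₁ θ₂ θ₃ : ℝ} (hθ₁ : 0 ≤ θ₁) (hθ₂ : 0 ≤ θ₂)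
    (hθ₃ : 0 ≤ θ₃) (ζ : ℝ) :
    bdsiwSurvival θ₁ θ₂ θ₃ ζ = maxShockSurvival (dsiwCDF θ₁ ζ) (dsiwCDF θ₂ ζ) (dsiwCDF θ₃ ζ) := by
  ext x y
  rw [bdsiwSurvival, maxShockSurvival, dsiwCDF_mul_s13 hθ₁ hθ₃, dsiwCDF_mul_s13 hθ₂ hθ₃]

/-- The joint survival function of the BDsIW distribution is totally positive of
order two: `R(u₁,v₁) R(u₂,v₂) ≥ R(u₂,v₁) R(u₁,v₂)` whenever `u₁ ≤ u₂`, `v₁ ≤ v₂`. -/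
theorem bdsiw_survival_TP2 (θ₁ θ₂ θ₃ ζ : ℝ)
    (hθ₁ : θ₁ ∈ Set.Ioo (0:ℝ) 1) (hθ₂ : θ₂ ∈ Set.Ioo (0:ℝ) 1)
    (hθ₃ : θ₃ ∈ Set.Ioo (0:ℝ) 1) (hζ : 0 < ζ)
    (u₁ u₂ v₁ v₂ : ℕ) (hu : u₁ ≤ u₂) (hv : v₁ ≤ v₂) :
    bdsiwSurvival θ₁ θ₂ θ₃ ζ u₂ v₁ * bdsiwSurvival θ₁ θ₂ θ₃ ζ u₁ v₂
      ≤ bdsiwSurvival θ₁ θ₂ θ₃ ζ u₁ v₁ * bdsiwSurvival θ₁ θ₂ θ₃ ζ u₂ v₂ := by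
  have hF : ∀ {θ}, θ ∈ Ioo (0:ℝ) 1 → ∀ x, dsiwCDF θ ζ x ∈ Icc 0 1 :=
    fun hθ x => Ioo_subset_Icc_self (dsiwCDF_mem_Ioo hθ ζ x)
  have hTP2 : IsTP2 (bdsiwSurvival θ₁ θ₂ θ₃ ζ) := by
    rw [bdsiwSurvival_eq_maxShockSurvival hθ₁.1.le hθ₂.1.le hθ₃.1.le]
    exact isTP2_maxShockSurvival (hF hθ₁) (hF hθ₂)
      (fun x => Ioo_subset_Ico_self (dsiwCDF_mem_Ioo hθ₃ ζ x))
      (dsiwCDF_monotone hθ₁ hζ.le) (dsiwCDF_monotone hθ₂ hζ.le) (dsiwCDF_monotone hθ₃ hζ.le)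
      (fun _ _ => dsiwCDF_one_sub_mul_le hθ₁ hθ₃ hζ.le)
      (fun _ _ => dsiwCDF_one_sub_mul_le hθ₂ hθ₃ hζ.le)
  exact hTP2 hu hv
end

section
/- For increasing functions f, g : ℕ → ℝ and (X₁,X₂) ~ BDsIW(θ₁,θ₂,θ₃,ζ) with f(X₁), g(X₂) having finite second moments, Cov(f(X₁), g(X₂)) ≥ 0. -/
open MeasureTheory ProbabilityTheory Filter Real Set

/-!
Condition on `W 2 = c`: then `f(X₁) = f(max (W 0) c)` and `g(X₂) = g(max (W 1) c)` are
independent, so `E[f(X₁) g(X₂)] = E[A(W 2) B(W 2)]`, `E f(X₁) = E A(W 2)` and `E g(X₂) = E B(W 2)`,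
where `A c = E f(max (W 0) c)` and `B c = E g(max (W 1) c)` are increasing in `c`. Two increasing
functions of one random variable are nonnegatively correlated (Chebyshev's integral inequality):
integrate `(A y - A x)(B y - B x) ≥ 0` against the law of two independent copies of `W 2`.
-/

section Chebyshev

variable {α : Type*} [MeasurableSpace α] {ν : Measure α} [IsProbabilityMeasure ν] {A B : α → ℝ}

theorem Monovary.integral_mul_integral_le_integral_mul (hAB : Monovary A B)
    (hA : Integrable A ν) (hB : Integrable B ν) (hAB_int : Integrable (fun x => A x * B x) ν) :
    (∫ x, A x ∂ν) * ∫ x, B x ∂ν ≤ ∫ x, A x * B x ∂ν := by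
  have hdiag₁ : Integrable (fun p : α × α => A p.1 * B p.1) (ν.prod ν) := hAB_int.comp_fst ν
  have hdiag₂ : Integrable (fun p : α × α => A p.2 * B p.2) (ν.prod ν) := hAB_int.comp_snd ν
  have hcross₁ : Integrable (fun p : α × α => A p.1 * B p.2) (ν.prod ν) := hA.mul_prod hB
  have hcross₂ : Integrable (fun p : α × α => B p.1 * A p.2) (ν.prod ν) := hB.mul_prod hA
  have hnonneg : 0 ≤ ∫ p, (A p.2 - A p.1) * (B p.2 - B p.1) ∂ν.prod ν :=
    integral_nonneg fun p => hAB.sub_mul_sub_nonneg p.1 p.2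
  have hexpand : ∫ p, (A p.2 - A p.1) * (B p.2 - B p.1) ∂ν.prod ν
      = 2 * ((∫ x, A x * B x ∂ν) - (∫ x, A x ∂ν) * ∫ x, B x ∂ν) := by
    have hsplit : (fun p : α × α => (A p.2 - A p.1) * (B p.2 - B p.1)) = fun p =>
        (A p.1 * B p.1 + A p.2 * B p.2) - (A p.1 * B p.2 + B p.1 * A p.2) := by
      ext p; ring
    rw [hsplit, integral_sub (f := fun p => _ + _) (g := fun p => _ + _)
        (hdiag₁.add hdiag₂) (hcross₁.add hcross₂),
      integral_add hdiag₁ hdiag₂, integral_add hcross₁ hcross₂,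
      integral_fun_fst (fun x => A x * B x), integral_fun_snd (fun x => A x * B x),
      integral_prod_mul, integral_prod_mul]
    simp only [probReal_univ, one_smul]
    ring
  linarith

end Chebyshev

section SharedCoordinate

variable {α β γ : Type*} [MeasurableSpace α] [MeasurableSpace β] [MeasurableSpace γ]
  [LinearOrder γ] {ρ₁ : Measure α} {ρ₂ : Measure β} {ν : Measure γ}
  [IsProbabilityMeasure ρ₁] [IsProbabilityMeasure ρ₂] [IsProbabilityMeasure ν]

theorem integral_mul_integral_le_integral_mul_of_monotone_shared {φ : α → γ → ℝ} {ψ : β → γ → ℝ}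
    (hφ_mono : ∀ x, Monotone (φ x)) (hψ_mono : ∀ y, Monotone (ψ y))
    (hφ_sec : ∀ z, Integrable (fun x => φ x z) ρ₁) (hψ_sec : ∀ z, Integrable (fun y => ψ y z) ρ₂)
    (hφ : Integrable (fun p : (α × β) × γ => φ p.1.1 p.2) ((ρ₁.prod ρ₂).prod ν))
    (hψ : Integrable (fun p : (α × β) × γ => ψ p.1.2 p.2) ((ρ₁.prod ρ₂).prod ν))
    (hφψ : Integrable (fun p : (α × β) × γ => φ p.1.1 p.2 * ψ p.1.2 p.2) ((ρ₁.prod ρ₂).prod ν)) :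
    (∫ p, φ p.1.1 p.2 ∂(ρ₁.prod ρ₂).prod ν) * ∫ p, ψ p.1.2 p.2 ∂(ρ₁.prod ρ₂).prod ν
      ≤ ∫ p, φ p.1.1 p.2 * ψ p.1.2 p.2 ∂(ρ₁.prod ρ₂).prod ν := by
  set A : γ → ℝ := fun z => ∫ x, φ x z ∂ρ₁
  set B : γ → ℝ := fun z => ∫ y, ψ y z ∂ρ₂
  have hA_mono : Monotone A := fun _ _ h => integral_mono (hφ_sec _) (hφ_sec _) fun x => hφ_mono x h
  have hB_mono : Monotone B := fun _ _ h => integral_mono (hψ_sec _) (hψ_sec _) fun y => hψ_mono y h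
  have hA_sec (z : γ) : ∫ q, φ q.1 z ∂ρ₁.prod ρ₂ = A z := by
    simp only [integral_fun_fst (fun x => φ x z), probReal_univ, one_smul, A]
  have hB_sec (z : γ) : ∫ q, ψ q.2 z ∂ρ₁.prod ρ₂ = B z := by
    simp only [integral_fun_snd (fun y => ψ y z), probReal_univ, one_smul, B]
  have hAB_sec (z : γ) : ∫ q, φ q.1 z * ψ q.2 z ∂ρ₁.prod ρ₂ = A z * B z :=
    integral_prod_mul (fun x => φ x z) (fun y => ψ y z)
  rw [integral_prod_symm _ hφ, integral_prod_symm _ hψ, integral_prod_symm _ hφψ]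
  simp only [hA_sec, hB_sec, hAB_sec]
  refine (hA_mono.monovary hB_mono).integral_mul_integral_le_integral_mul ?_ ?_ ?_
  · simpa only [hA_sec] using hφ.integral_prod_right
  · simpa only [hB_sec] using hψ.integral_prod_right
  · simpa only [hAB_sec] using hφψ.integral_prod_right

end SharedCoordinate

theorem ProbabilityTheory.iIndepFun.map_prodMk_prodMk_eq_prod {Ω ι β : Type*}
    [MeasurableSpace Ω] [MeasurableSpace β] {μ : Measure Ω} [IsFiniteMeasure μ]
    {W : ι → Ω → β} (hindep : iIndepFun W μ) (hW : ∀ i, Measurable (W i)) {i j k : ι}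
    (hij : i ≠ j) (hik : i ≠ k) (hjk : j ≠ k) :
    μ.map (fun ω => ((W i ω, W j ω), W k ω))
      = ((μ.map (W i)).prod (μ.map (W j))).prod (μ.map (W k)) := by
  rw [(indepFun_iff_map_prod_eq_prod_map_map ((hW i).prodMk (hW j)).aemeasurable
      (hW k).aemeasurable).mp (hindep.indepFun_prodMk hW i j k hik hjk),
    (indepFun_iff_map_prod_eq_prod_map_map (hW i).aemeasurable (hW j).aemeasurable).mp
      (hindep.indepFun hij)]

theorem Monotone.integrable_map_of_le {Ω β : Type*} [MeasurableSpace Ω] [MeasurableSpace β]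
    [Countable β] [MeasurableSingletonClass β] [Preorder β] [OrderBot β]
    {μ : Measure Ω} [IsFiniteMeasure μ] {h : β → ℝ} (hh : Monotone h) {X : Ω → β}
    (hX : Measurable X) {Y : Ω → ℝ} (hY : Integrable Y μ) (hle : ∀ ω, h (X ω) ≤ Y ω) :
    Integrable h (μ.map X) := by
  have hh_meas := measurable_of_countable h
  refine (integrable_map_measure hh_meas.aestronglyMeasurable hX.aemeasurable).mpr ?_
  exact integrable_of_le_of_le (hh_meas.comp hX).aestronglyMeasurable
    (.of_forall fun _ => hh bot_le) (.of_forall hle) (integrable_const (h ⊥)) hY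

theorem bdsiw_cov_nonneg_general {Ω : Type*} [MeasurableSpace Ω] (μ : Measure Ω)
    [IsProbabilityMeasure μ]
    (W : Fin 3 → Ω → ℕ) (hW : ∀ i, Measurable (W i))
    (hindep : iIndepFun W μ)
    (f g : ℕ → ℝ) (hf : Monotone f) (hg : Monotone g)
    (hf2 : MemLp (fun ω => f (max (W 0 ω) (W 2 ω))) 2 μ)
    (hg2 : MemLp (fun ω => g (max (W 1 ω) (W 2 ω))) 2 μ) :
    0 ≤ ∫ ω, f (max (W 0 ω) (W 2 ω)) * g (max (W 1 ω) (W 2 ω)) ∂μ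
        - (∫ ω, f (max (W 0 ω) (W 2 ω)) ∂μ) * ∫ ω, g (max (W 1 ω) (W 2 ω)) ∂μ := by
  have (i : Fin 3) : IsProbabilityMeasure (μ.map (W i)) :=
    Measure.isProbabilityMeasure_map (hW i).aemeasurable
  have hT : Measurable fun ω => ((W 0 ω, W 1 ω), W 2 ω) := ((hW 0).prodMk (hW 1)).prodMk (hW 2)
  have hlaw := hindep.map_prodMk_prodMk_eq_prod hW (i := 0) (j := 1) (k := 2)
    (by decide) (by decide) (by decide)
  have hint (Φ : (ℕ × ℕ) × ℕ → ℝ) (h : Integrable (fun ω => Φ ((W 0 ω, W 1 ω), W 2 ω)) μ) :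
      Integrable Φ (((μ.map (W 0)).prod (μ.map (W 1))).prod (μ.map (W 2))) := by
    rwa [← hlaw, integrable_map_measure (measurable_of_countable Φ).aestronglyMeasurable
      hT.aemeasurable]
  have hF := hf2.integrable one_le_two
  have hG := hg2.integrable one_le_two
  have key := integral_mul_integral_le_integral_mul_of_monotone_shared
    (φ := fun x c => f (max x c)) (ψ := fun y c => g (max y c))
    (fun _ _ _ h => hf (max_le_max_left _ h)) (fun _ _ _ h => hg (max_le_max_left _ h))
    (fun _ => by
      simp only [hf.map_max]
      exact (hf.integrable_map_of_le (hW 0) hF fun _ => hf (le_max_left _ _)).sup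
        (integrable_const _))
    (fun _ => by
      simp only [hg.map_max]
      exact (hg.integrable_map_of_le (hW 1) hG fun _ => hg (le_max_left _ _)).sup
        (integrable_const _))
    (hint _ hF) (hint _ hG) (hint _ (hf2.integrable_mul hg2))
  rw [← hlaw, integral_map hT.aemeasurable (measurable_of_countable _).aestronglyMeasurable,
    integral_map hT.aemeasurable (measurable_of_countable _).aestronglyMeasurable,
    integral_map hT.aemeasurable (measurable_of_countable _).aestronglyMeasurable] at key
  exact sub_nonneg.mpr key

/-- For increasing functions `f, g : ℕ → ℝ` and `(X₁,X₂) ~ BDsIW(θ₁,θ₂,θ₃,ζ)` with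
`f(X₁)`, `g(X₂)` square-integrable, `Cov(f(X₁), g(X₂)) ≥ 0`. -/
theorem bdsiw_cov_nonneg {Ω : Type*} [MeasurableSpace Ω] (μ : Measure Ω)
    [IsProbabilityMeasure μ] (θ : Fin 3 → ℝ) (ζ : ℝ)
    (hθ : ∀ i, θ i ∈ Set.Ioo (0:ℝ) 1) (hζ : 0 < ζ)
    (W : Fin 3 → Ω → ℕ) (hW : ∀ i, Measurable (W i))
    (hindep : iIndepFun W μ)
    (hcdf : ∀ i x, μ {ω | W i ω ≤ x} = ENNReal.ofReal (dsiwCDF (θ i) ζ x))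
    (f g : ℕ → ℝ) (hf : Monotone f) (hg : Monotone g)
    (hf2 : MemLp (fun ω => f (max (W 0 ω) (W 2 ω))) 2 μ)
    (hg2 : MemLp (fun ω => g (max (W 1 ω) (W 2 ω))) 2 μ) :
    0 ≤ ∫ ω, f (max (W 0 ω) (W 2 ω)) * g (max (W 1 ω) (W 2 ω)) ∂μ
        - (∫ ω, f (max (W 0 ω) (W 2 ω)) ∂μ) * ∫ ω, g (max (W 1 ω) (W 2 ω)) ∂μ :=
  bdsiw_cov_nonneg_general μ W hW hindep f g hf hg hf2 hg2
end

section
/- The DsIW(θ,ζ) distribution has infinite mean for any 0 < θ < 1 and 0 < ζ ≤ 1: if X ~ DsIW(θ,ζ) then E[X] = Σ_{x=0}^∞ P(X > x) = Σ_{x=0}^∞ (1 − θ^((x+1)^(−ζ))) = ∞. -/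
open MeasureTheory ProbabilityTheory Filter Real Set

/-!
By the tail-sum formula the mean is `∑ₓ (1 - θ^s)` with `s = (x+1)^(-ζ)`. Since `ζ ≤ 1` we have
`s ≥ 1/(x+1)`, and Bernoulli's inequality `θ^t ≤ 1 - t(1 - θ)` for `t ∈ [0,1]` bounds every term
below by `(1 - θ)/(x+1)`, a multiple of the harmonic series.
-/

open scoped ENNReal

theorem natCast_eq_tsum_ite_lt (k : ℕ) : (k : ℝ≥0∞) = ∑' n : ℕ, if n < k then 1 else 0 := by
  rw [tsum_eq_sum (s := Finset.range k) fun n hn => if_neg (by simpa using hn),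
    Finset.sum_congr rfl fun n hn => if_pos (Finset.mem_range.mp hn)]
  simp

theorem lintegral_natCast_eq_tsum_measure_lt {Ω : Type*} [MeasurableSpace Ω] (μ : Measure Ω)
    {X : Ω → ℕ} (hX : Measurable X) :
    ∫⁻ ω, (X ω : ℝ≥0∞) ∂μ = ∑' n : ℕ, μ {ω | n < X ω} := by
  have hmeas (n : ℕ) : MeasurableSet {ω | n < X ω} := hX measurableSet_Ioi
  calc ∫⁻ ω, (X ω : ℝ≥0∞) ∂μ = ∫⁻ ω, ∑' n : ℕ, {ω | n < X ω}.indicator 1 ω ∂μ := by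
        congr with ω
        simp only [natCast_eq_tsum_ite_lt (X ω), indicator_apply, mem_ofPred_eq, Pi.one_apply]
    _ = ∑' n : ℕ, μ {ω | n < X ω} := by
        rw [lintegral_tsum fun n => (measurable_one.indicator (hmeas n)).aemeasurable]
        simp only [lintegral_indicator_one (hmeas _)]

theorem prob_compl_eq_ofReal_one_sub {Ω : Type*} [MeasurableSpace Ω] {μ : Measure Ω}
    [IsProbabilityMeasure μ] {s : Set Ω} (hs : MeasurableSet s) {p : ℝ} (hp : 0 ≤ p)
    (hμs : μ s = ENNReal.ofReal p) : μ sᶜ = ENNReal.ofReal (1 - p) := by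
  rw [prob_compl_eq_one_sub hs, hμs, ENNReal.ofReal_sub _ hp, ENNReal.ofReal_one]

theorem mul_one_sub_le_one_sub_rpow {θ t : ℝ} (hθ : 0 ≤ θ) (ht0 : 0 ≤ t) (ht1 : t ≤ 1) :
    t * (1 - θ) ≤ 1 - θ ^ t := by
  have := rpow_one_add_le_one_add_mul_self (s := θ - 1) (by linarith) ht0 ht1
  rw [add_sub_cancel] at this
  linarith

theorem div_succ_le_one_sub_dsiwCDF {θ ζ : ℝ} (hθ0 : 0 < θ) (hθ1 : θ ≤ 1) (hζ1 : ζ ≤ 1) (x : ℕ) :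
    (1 - θ) / ((x : ℝ) + 1) ≤ 1 - dsiwCDF θ ζ x := by
  have hx1 : (1 : ℝ) ≤ (x : ℝ) + 1 := le_add_of_nonneg_left x.cast_nonneg
  have hinv : ((x : ℝ) + 1)⁻¹ ≤ ((x : ℝ) + 1) ^ (-ζ) := by
    simpa [rpow_neg_one] using rpow_le_rpow_of_exponent_le hx1 (neg_le_neg hζ1)
  calc (1 - θ) / ((x : ℝ) + 1) = ((x : ℝ) + 1)⁻¹ * (1 - θ) := by ring
    _ ≤ 1 - θ ^ ((x : ℝ) + 1)⁻¹ :=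
        mul_one_sub_le_one_sub_rpow hθ0.le (by positivity) (inv_le_one_of_one_le₀ hx1)
    _ ≤ 1 - dsiwCDF θ ζ x := sub_le_sub_left (rpow_le_rpow_of_exponent_ge hθ0 hθ1 hinv) 1

theorem not_summable_of_div_succ_le {f : ℕ → ℝ} {c : ℝ} (hc : 0 < c)
    (hf : ∀ n : ℕ, c / ((n : ℝ) + 1) ≤ f n) : ¬Summable f := by
  have harmonic : ¬Summable fun n : ℕ => 1 / ((n : ℝ) + 1) := by
    rw [not_summable_iff_tendsto_nat_atTop_of_nonneg fun n => by positivity]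
    exact Real.tendsto_sum_range_one_div_nat_succ_atTop
  intro hsum
  refine harmonic ((summable_mul_left_iff hc.ne').mp ?_)
  exact hsum.of_nonneg_of_le (fun n => by positivity) fun n => (mul_one_div c _).trans_le (hf n)

theorem ENNReal.tsum_ofReal_eq_top_of_not_summable {f : ℕ → ℝ} (hf : ∀ n, 0 ≤ f n)
    (h : ¬Summable f) : ∑' n, ENNReal.ofReal (f n) = ∞ := by
  by_contra hfin
  exact h <| (ENNReal.summable_toReal hfin).congr fun n => ENNReal.toReal_ofReal (hf n)

theorem dsiw_infinite_mean_general {Ω : Type*} [MeasurableSpace Ω] (μ : Measure Ω)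
    [IsProbabilityMeasure μ] (θ ζ : ℝ) (hθ : θ ∈ Set.Ioo (0:ℝ) 1)
    (hζ1 : ζ ≤ 1)
    (X : Ω → ℕ) (hX : Measurable X)
    (hcdf : ∀ x, μ {ω | X ω ≤ x} = ENNReal.ofReal (dsiwCDF θ ζ x)) :
    (∫⁻ ω, (X ω : ENNReal) ∂μ) = ∑' x : ℕ, μ {ω | x < X ω} ∧
    (∑' x : ℕ, μ {ω | x < X ω}) = ∑' x : ℕ, ENNReal.ofReal (1 - dsiwCDF θ ζ x) ∧
    (∑' x : ℕ, ENNReal.ofReal (1 - dsiwCDF θ ζ x)) = ⊤ ∧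
    (∫⁻ ω, (X ω : ENNReal) ∂μ) = ⊤ := by
  obtain ⟨hθ0, hθ1⟩ := hθ
  have htail := lintegral_natCast_eq_tsum_measure_lt μ hX
  have hsurv (x : ℕ) : μ {ω | x < X ω} = ENNReal.ofReal (1 - dsiwCDF θ ζ x) := by
    rw [show {ω | x < X ω} = {ω | X ω ≤ x}ᶜ by ext; simp]
    exact prob_compl_eq_ofReal_one_sub (hX measurableSet_Iic) (rpow_nonneg hθ0.le _) (hcdf x)
  have hbound := div_succ_le_one_sub_dsiwCDF hθ0 hθ1.le hζ1
  have hdiv : ∑' x : ℕ, ENNReal.ofReal (1 - dsiwCDF θ ζ x) = ⊤ :=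
    ENNReal.tsum_ofReal_eq_top_of_not_summable
      (fun x => (div_nonneg (sub_pos.2 hθ1).le (by positivity)).trans (hbound x))
      (not_summable_of_div_succ_le (sub_pos.2 hθ1) hbound)
  exact ⟨htail, tsum_congr hsurv, hdiv, by rw [htail, tsum_congr hsurv, hdiv]⟩

/-- The DsIW(θ,ζ) distribution has infinite mean for `0 < θ < 1` and `0 < ζ ≤ 1`:
if `X ~ DsIW(θ,ζ)` then
`E[X] = ∑_{x=0}^∞ P(X > x) = ∑_{x=0}^∞ (1 − θ^((x+1)^(-ζ))) = ∞`. -/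
theorem dsiw_infinite_mean {Ω : Type*} [MeasurableSpace Ω] (μ : Measure Ω)
    [IsProbabilityMeasure μ] (θ ζ : ℝ) (hθ : θ ∈ Set.Ioo (0:ℝ) 1)
    (hζ : 0 < ζ) (hζ1 : ζ ≤ 1)
    (X : Ω → ℕ) (hX : Measurable X)
    (hcdf : ∀ x, μ {ω | X ω ≤ x} = ENNReal.ofReal (dsiwCDF θ ζ x)) :
    (∫⁻ ω, (X ω : ENNReal) ∂μ) = ∑' x : ℕ, μ {ω | x < X ω} ∧
    (∑' x : ℕ, μ {ω | x < X ω}) = ∑' x : ℕ, ENNReal.ofReal (1 - dsiwCDF θ ζ x) ∧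
    (∑' x : ℕ, ENNReal.ofReal (1 - dsiwCDF θ ζ x)) = ⊤ ∧
    (∫⁻ ω, (X ω : ENNReal) ∂μ) = ⊤ :=
  dsiw_infinite_mean_general μ θ ζ hθ hζ1 X hX hcdf
end
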